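/- Let ρ ∈ (0,1) and let ζ satisfy max(0, 2ρ−1) ≤ ζ ≤ ρ. Define G(ζ) = −H({ζ, ρ−ζ, ρ−ζ, 1−2ρ+ζ}) + 2H(ρ), where H({p_1,…,p_k}) = −Σ_i p_i log p_i (with the convention 0 log 0 = 0) and H(p) = −p log p − (1−p) log(1−p). Then G(ζ) ≥ ζ log( ζ(1−ρ)/(e ρ²) ). -/
import Mathlib


noncomputable section

/-- Entropy rate `G(ζ) = -H({ζ, ρ-ζ, ρ-ζ, 1-2ρ+ζ}) + 2H(ρ)`, where
`H({p_i}) = -Σ p_i log p_i` (with `0 log 0 = 0`) and `H` is the binary entropy. -/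
def Gfun (ρ ζ : ℝ) : ℝ :=
  -(Real.negMulLog ζ + Real.negMulLog (ρ - ζ) + Real.negMulLog (ρ - ζ)
      + Real.negMulLog (1 - 2*ρ + ζ)) + 2 * Real.binEntropy ρ

/-- Gibbs-type inequality: `x log x ≥ x log y + x - y` for `x ≥ 0`, `y > 0`. -/
lemma klem (x y : ℝ) (hx : 0 ≤ x) (hy : 0 < y) :
    x * Real.log y + x - y ≤ x * Real.log x := by
  rcases eq_or_lt_of_le hx with h | h
  · rw [← h]; simp; linarith
  · have h1 : Real.log (y / x) ≤ y / x - 1 :=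
      Real.log_le_sub_one_of_pos (by positivity)
    rw [Real.log_div hy.ne' h.ne'] at h1
    have h2 := mul_le_mul_of_nonneg_left h1 h.le
    have h3 : x * (y / x - 1) = y - x := by field_simp
    rw [h3] at h2
    nlinarith [h2]

/-- Key bound, valid also at `ζ = 0`. -/
lemma key_bound (ρ ζ : ℝ) (hρ0 : 0 < ρ) (hρ1 : ρ < 1) (hζ0 : 0 ≤ ζ)
    (hζρ : ζ ≤ ρ) (h2ρ : 2 * ρ - 1 ≤ ζ) :
    ζ * Real.log ζ + ζ * Real.log (1 - ρ) - ζ - 2 * ζ * Real.log ρ ≤ Gfun ρ ζ := by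
  have hb : (0:ℝ) < 1 - ρ := by linarith
  have hA : (1 - 2*ρ + ζ) * Real.log (1 - ρ) + (1 - 2*ρ + ζ) - (1 - ρ) ≤
      (1 - 2*ρ + ζ) * Real.log (1 - 2*ρ + ζ) :=
    klem _ _ (by linarith) hb
  have hB : (ρ - ζ) * Real.log ρ + (ρ - ζ) - ρ ≤ (ρ - ζ) * Real.log (ρ - ζ) :=
    klem _ _ (by linarith) hρ0
  have hC : Real.log (1 - ρ) ≤ (1 - ρ) - 1 := Real.log_le_sub_one_of_pos hb
  simp only [Gfun, Real.negMulLog, Real.binEntropy, Real.log_inv]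
  set La := Real.log (ρ - ζ) with hLa
  set Ld := Real.log (1 - 2*ρ + ζ) with hLd
  set Lb := Real.log (1 - ρ) with hLb
  set Lρ := Real.log ρ with hLρ
  set Lζ := Real.log ζ with hLζ
  nlinarith [hA, hB, hC]

/-- **Lower bound on the hypergeometric entropy rate.** For `ρ ∈ (0,1)` and
`max(0, 2ρ-1) ≤ ζ ≤ ρ`, one has `G(ζ) ≥ ζ log(ζ(1-ρ)/(e ρ²))`. -/
theorem Gfun_lower_bound (ρ ζ : ℝ) (hρ : ρ ∈ Set.Ioo (0:ℝ) 1)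
    (hζ : ζ ∈ Set.Icc (max 0 (2*ρ - 1)) ρ) :
    ζ * Real.log (ζ * (1 - ρ) / (Real.exp 1 * ρ^2)) ≤ Gfun ρ ζ := by
  obtain ⟨hρ0, hρ1⟩ := hρ
  obtain ⟨hζlo, hζρ⟩ := hζ
  have hζ0 : 0 ≤ ζ := le_trans (le_max_left _ _) hζlo
  have h2ρ : 2 * ρ - 1 ≤ ζ := le_trans (le_max_right _ _) hζlo
  have hb : (0:ℝ) < 1 - ρ := by linarith
  have hkey := key_bound ρ ζ hρ0 hρ1 hζ0 hζρ h2ρ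
  rcases eq_or_lt_of_le hζ0 with h | h
  · rw [← h] at hkey ⊢
    simpa using hkey
  · have hlog : Real.log (ζ * (1 - ρ) / (Real.exp 1 * ρ^2)) =
        Real.log ζ + Real.log (1 - ρ) - (1 + 2 * Real.log ρ) := by
      rw [Real.log_div (by positivity) (by positivity),
        Real.log_mul (by positivity) (by positivity),
        Real.log_mul (by positivity) (by positivity), Real.log_exp,
        Real.log_pow]
      push_cast
      ring
    rw [hlog]
    nlinarith [hkey]

end
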